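/- arXiv:nlin/0411061 — 4 statements merged into one kernel-verified Lean document; each statement's English description precedes it below -/
import Mathlib

section
/- Let a, b, c, s, a₁, a₂, b₁, b₂ be real constants such that ψ(x,y,z,t) = a²x² + b²y² + c²z² + 2(a₁a² + a₂c²)t + s² is strictly positive on the domain {t ≥ 0} (e.g., s ≠ 0 and a₁a² + a₂c² ≥ 0). Then w(x,y,z,t) = -2a²x / ψ(x,y,z,t) equals ∂_x(-log ψ) and ũ := -log ψ solves K[ũ] = 0 (with ρ = μ = λ = 0) on this domain. -/
open Real

/-- x-partial derivative of a function of (x,y,z,t). -/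
noncomputable def px (u : ℝ → ℝ → ℝ → ℝ → ℝ) : ℝ → ℝ → ℝ → ℝ → ℝ :=
  fun x y z t => deriv (fun x' => u x' y z t) x

/-- y-partial derivative. -/
noncomputable def py (u : ℝ → ℝ → ℝ → ℝ → ℝ) : ℝ → ℝ → ℝ → ℝ → ℝ :=
  fun x y z t => deriv (fun y' => u x y' z t) y

/-- z-partial derivative. -/
noncomputable def pz (u : ℝ → ℝ → ℝ → ℝ → ℝ) : ℝ → ℝ → ℝ → ℝ → ℝ :=
  fun x y z t => deriv (fun z' => u x y z' t) z

/-- t-partial derivative. -/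
noncomputable def pt (u : ℝ → ℝ → ℝ → ℝ → ℝ) : ℝ → ℝ → ℝ → ℝ → ℝ :=
  fun x y z t => deriv (fun t' => u x y z t') t

/-- Smoothness of a function of four real variables. -/
def Smooth4 (u : ℝ → ℝ → ℝ → ℝ → ℝ) : Prop :=
  ContDiff ℝ (⊤ : ℕ∞) (fun p : ℝ × ℝ × ℝ × ℝ => u p.1 p.2.1 p.2.2.1 p.2.2.2)

/-- The nonlinear operator K[u] of the 3+1 dimensional generalized Burgers equation. -/
noncomputable def Keq (a₁ a₂ b₁ b₂ ρ μ lam : ℝ) (u : ℝ → ℝ → ℝ → ℝ → ℝ) :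
    ℝ → ℝ → ℝ → ℝ → ℝ :=
  fun x y z t =>
    pt u x y z t
      + a₁ * ((px u x y z t) ^ 2 - px (px u) x y z t)
      + a₂ * ((pz u x y z t) ^ 2 - pz (pz u) x y z t)
      + b₁ * (px u x y z t * py u x y z t - px (py u) x y z t)
      + b₂ * (px u x y z t * pz u x y z t - px (pz u) x y z t)
      - ρ * px u x y z t - μ * py u x y z t - lam * pz u x y z t

lemma hasDerivAt_quad (A B : ℝ) (x : ℝ) :
    HasDerivAt (fun x' : ℝ => A * x' ^ 2 + B) (2 * A * x) x := by
  have h := ((hasDerivAt_pow 2 x).const_mul A).add_const B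
  exact h.congr_deriv (by rw [show (2:ℕ) - 1 = 1 from rfl]; push_cast; ring)

lemma hasDerivAt_neg_log_quad (A B x : ℝ) (h : A * x ^ 2 + B ≠ 0) :
    HasDerivAt (fun x' : ℝ => -Real.log (A * x' ^ 2 + B))
      (-(2 * A * x) / (A * x ^ 2 + B)) x := by
  have h1 := ((Real.hasDerivAt_log h).comp x (hasDerivAt_quad A B x)).neg
  exact h1.congr_deriv (by rw [neg_div, div_eq_inv_mul])

lemma hasDerivAt_neg_log_affine (E B t : ℝ) (h : E * t + B ≠ 0) :
    HasDerivAt (fun t' : ℝ => -Real.log (E * t' + B)) (-E / (E * t + B)) t := by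
  have h0 : HasDerivAt (fun t' : ℝ => E * t' + B) E t := by
    simpa using ((hasDerivAt_id t).const_mul E).add_const B
  have h1 := ((Real.hasDerivAt_log h).comp t h0).neg
  exact h1.congr_deriv (by rw [neg_div, div_eq_inv_mul])

lemma hasDerivAt_lin_div_quad (A B C x : ℝ) (h : A * x ^ 2 + B ≠ 0) :
    HasDerivAt (fun x' : ℝ => C * x' / (A * x' ^ 2 + B))
      ((C * (A * x ^ 2 + B) - C * x * (2 * A * x)) / (A * x ^ 2 + B) ^ 2) x := by
  have hn : HasDerivAt (fun x' : ℝ => C * x') C x := by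
    simpa using (hasDerivAt_id x).const_mul C
  exact hn.div (hasDerivAt_quad A B x) h

lemma hasDerivAt_const_div_quad (A B C x : ℝ) (h : A * x ^ 2 + B ≠ 0) :
    HasDerivAt (fun x' : ℝ => C / (A * x' ^ 2 + B))
      ((0 * (A * x ^ 2 + B) - C * (2 * A * x)) / (A * x ^ 2 + B) ^ 2) x :=
  (hasDerivAt_const x C).div (hasDerivAt_quad A B x) h

/-- Example 4.1: with ψ = a²x² + b²y² + c²z² + 2(a₁a² + a₂c²)t + s² positive for t ≥ 0,
the function w = -2a²x/ψ equals ∂_x(-log ψ), and ũ = -log ψ solves K[ũ] = 0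
(with ρ = μ = λ = 0) on the domain t ≥ 0. -/
theorem rationally_localized_impulse (a b c s a₁ a₂ b₁ b₂ : ℝ)
    (ψ : ℝ → ℝ → ℝ → ℝ → ℝ)
    (hψ : ψ = fun x y z t =>
      a ^ 2 * x ^ 2 + b ^ 2 * y ^ 2 + c ^ 2 * z ^ 2
        + 2 * (a₁ * a ^ 2 + a₂ * c ^ 2) * t + s ^ 2)
    (hpos : ∀ x y z t, 0 ≤ t → 0 < ψ x y z t)
    (u' : ℝ → ℝ → ℝ → ℝ → ℝ) (hu' : u' = fun x y z t => -Real.log (ψ x y z t))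
    (w : ℝ → ℝ → ℝ → ℝ → ℝ)
    (hw : w = fun x y z t => -(2 * a ^ 2 * x) / ψ x y z t) :
    ∀ x y z t, 0 ≤ t →
      (w x y z t = px u' x y z t ∧ Keq a₁ a₂ b₁ b₂ 0 0 0 u' x y z t = 0) := by
  intro x y z t ht
  have hne : ∀ x' y' z' t', 0 ≤ t' → ψ x' y' z' t' ≠ 0 :=
    fun x' y' z' t' h => ne_of_gt (hpos x' y' z' t' h)
  set Q : ℝ := a₁ * a ^ 2 + a₂ * c ^ 2 with hQdef
  -- ψ rearranged as a quadratic in each variable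
  have hBx : ∀ x' y' z' t', ψ x' y' z' t'
      = a ^ 2 * x' ^ 2 + (b ^ 2 * y' ^ 2 + c ^ 2 * z' ^ 2 + 2 * Q * t' + s ^ 2) := by
    intro x' y' z' t'; simp only [hψ]; ring
  have hBy : ∀ x' y' z' t', ψ x' y' z' t'
      = b ^ 2 * y' ^ 2 + (a ^ 2 * x' ^ 2 + c ^ 2 * z' ^ 2 + 2 * Q * t' + s ^ 2) := by
    intro x' y' z' t'; simp only [hψ]; ring
  have hBz : ∀ x' y' z' t', ψ x' y' z' t'
      = c ^ 2 * z' ^ 2 + (a ^ 2 * x' ^ 2 + b ^ 2 * y' ^ 2 + 2 * Q * t' + s ^ 2) := by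
    intro x' y' z' t'; simp only [hψ]; ring
  have hBt : ∀ x' y' z' t', ψ x' y' z' t'
      = 2 * Q * t' + (a ^ 2 * x' ^ 2 + b ^ 2 * y' ^ 2 + c ^ 2 * z' ^ 2 + s ^ 2) := by
    intro x' y' z' t'; simp only [hψ]; ring
  -- first partial in x, for all x' (fixed y z t)
  have hpx : ∀ x', px u' x' y z t = -(2 * a ^ 2 * x') / ψ x' y z t := by
    intro x'
    have hfun : (fun x'' => u' x'' y z t)
        = fun x'' => -Real.log (a ^ 2 * x'' ^ 2
            + (b ^ 2 * y ^ 2 + c ^ 2 * z ^ 2 + 2 * Q * t + s ^ 2)) := by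
      funext x''; simp only [hu']; rw [hBx]
    have hne' : a ^ 2 * x' ^ 2 + (b ^ 2 * y ^ 2 + c ^ 2 * z ^ 2 + 2 * Q * t + s ^ 2) ≠ 0 := by
      rw [← hBx]; exact hne x' y z t ht
    rw [px, hfun, (hasDerivAt_neg_log_quad _ _ x' hne').deriv, ← hBx]
  have hpy : ∀ x', py u' x' y z t = -(2 * b ^ 2 * y) / ψ x' y z t := by
    intro x'
    have hfun : (fun y'' => u' x' y'' z t)
        = fun y'' => -Real.log (b ^ 2 * y'' ^ 2
            + (a ^ 2 * x' ^ 2 + c ^ 2 * z ^ 2 + 2 * Q * t + s ^ 2)) := by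
      funext y''; simp only [hu']; rw [hBy]
    have hne' : b ^ 2 * y ^ 2 + (a ^ 2 * x' ^ 2 + c ^ 2 * z ^ 2 + 2 * Q * t + s ^ 2) ≠ 0 := by
      rw [← hBy]; exact hne x' y z t ht
    rw [py, hfun, (hasDerivAt_neg_log_quad _ _ y hne').deriv, ← hBy]
  have hpz : ∀ x' z', pz u' x' y z' t = -(2 * c ^ 2 * z') / ψ x' y z' t := by
    intro x' z'
    have hfun : (fun z'' => u' x' y z'' t)
        = fun z'' => -Real.log (c ^ 2 * z'' ^ 2
            + (a ^ 2 * x' ^ 2 + b ^ 2 * y ^ 2 + 2 * Q * t + s ^ 2)) := by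
      funext z''; simp only [hu']; rw [hBz]
    have hne' : c ^ 2 * z' ^ 2 + (a ^ 2 * x' ^ 2 + b ^ 2 * y ^ 2 + 2 * Q * t + s ^ 2) ≠ 0 := by
      rw [← hBz]; exact hne x' y z' t ht
    rw [pz, hfun, (hasDerivAt_neg_log_quad _ _ z' hne').deriv, ← hBz]
  have hpt : pt u' x y z t = -(2 * Q) / ψ x y z t := by
    have hfun : (fun t'' => u' x y z t'')
        = fun t'' => -Real.log (2 * Q * t''
            + (a ^ 2 * x ^ 2 + b ^ 2 * y ^ 2 + c ^ 2 * z ^ 2 + s ^ 2)) := by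
      funext t''; simp only [hu']; rw [hBt]
    have hne' : 2 * Q * t + (a ^ 2 * x ^ 2 + b ^ 2 * y ^ 2 + c ^ 2 * z ^ 2 + s ^ 2) ≠ 0 := by
      rw [← hBt]; exact hne x y z t ht
    rw [pt, hfun, (hasDerivAt_neg_log_affine _ _ t hne').deriv, ← hBt]
  -- second partials
  have hne0 := hne x y z t ht
  have hnex : a ^ 2 * x ^ 2 + (b ^ 2 * y ^ 2 + c ^ 2 * z ^ 2 + 2 * Q * t + s ^ 2) ≠ 0 := by
    rw [← hBx]; exact hne0
  have hnez : c ^ 2 * z ^ 2 + (a ^ 2 * x ^ 2 + b ^ 2 * y ^ 2 + 2 * Q * t + s ^ 2) ≠ 0 := by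
    rw [← hBz]; exact hne0
  have hpxx : px (px u') x y z t
      = ((-(2 * a ^ 2)) * ψ x y z t - (-(2 * a ^ 2)) * x * (2 * a ^ 2 * x)) / (ψ x y z t) ^ 2 := by
    have hfun : (fun x' => px u' x' y z t)
        = fun x' => (-(2 * a ^ 2)) * x' / (a ^ 2 * x' ^ 2
            + (b ^ 2 * y ^ 2 + c ^ 2 * z ^ 2 + 2 * Q * t + s ^ 2)) := by
      funext x'; rw [hpx x', hBx]; ring
    rw [px, hfun, (hasDerivAt_lin_div_quad _ _ _ x hnex).deriv, ← hBx]
  have hpzz : pz (pz u') x y z t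
      = ((-(2 * c ^ 2)) * ψ x y z t - (-(2 * c ^ 2)) * z * (2 * c ^ 2 * z)) / (ψ x y z t) ^ 2 := by
    have hfun : (fun z' => pz u' x y z' t)
        = fun z' => (-(2 * c ^ 2)) * z' / (c ^ 2 * z' ^ 2
            + (a ^ 2 * x ^ 2 + b ^ 2 * y ^ 2 + 2 * Q * t + s ^ 2)) := by
      funext z'; rw [hpz x z', hBz]; ring
    rw [pz, hfun, (hasDerivAt_lin_div_quad _ _ _ z hnez).deriv, ← hBz]
  have hpxy : px (py u') x y z t
      = (0 * ψ x y z t - (-(2 * b ^ 2 * y)) * (2 * a ^ 2 * x)) / (ψ x y z t) ^ 2 := by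
    have hfun : (fun x' => py u' x' y z t)
        = fun x' => (-(2 * b ^ 2 * y)) / (a ^ 2 * x' ^ 2
            + (b ^ 2 * y ^ 2 + c ^ 2 * z ^ 2 + 2 * Q * t + s ^ 2)) := by
      funext x'; rw [hpy x', hBx]
    rw [px, hfun, (hasDerivAt_const_div_quad _ _ _ x hnex).deriv, ← hBx]
  have hpxz : px (pz u') x y z t
      = (0 * ψ x y z t - (-(2 * c ^ 2 * z)) * (2 * a ^ 2 * x)) / (ψ x y z t) ^ 2 := by
    have hfun : (fun x' => pz u' x' y z t)
        = fun x' => (-(2 * c ^ 2 * z)) / (a ^ 2 * x' ^ 2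
            + (b ^ 2 * y ^ 2 + c ^ 2 * z ^ 2 + 2 * Q * t + s ^ 2)) := by
      funext x'; rw [hpz x' z, hBx]
    rw [px, hfun, (hasDerivAt_const_div_quad _ _ _ x hnex).deriv, ← hBx]
  refine ⟨by rw [hw, hpx x], ?_⟩
  rw [Keq]
  rw [hpt, hpx x, hpy x, hpz x z, hpxx, hpzz, hpxy, hpxz, hQdef]
  field_simp
  ring
end

section
/- Let c₁, c₂, c₃ > 0 and parameters as in Example 4.2 with β = -αa₁/b₁ and a₁a² + a₂b² + abb₂ = 0. Then the function w(x,y,z,t) = -(αc₁ sinh(αx+βy) + ac₂ sinh(ax+bz)) / (c₁ cosh(αx+βy) + c₂ cosh(ax+bz) + c₃ e^{a₂c²t} cosh(cz)) equals ∂_x(-log ψ) where ψ = c₁cosh(αx+βy) + c₂cosh(ax+bz) + c₃e^{a₂c²t}cosh(cz) > 0, and ũ = -log ψ solves K[ũ] = 0 with ρ = μ = λ = 0. -/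
open Real

lemma hd_affine (q r x : ℝ) : HasDerivAt (fun s : ℝ => q * s + r) q x := by
  simpa using ((hasDerivAt_id x).const_mul q).add_const r

lemma hd_affine' (q r x : ℝ) : HasDerivAt (fun s : ℝ => r + q * s) q x := by
  simpa using ((hasDerivAt_id x).const_mul q).const_add r

lemma hd_lin (q x : ℝ) : HasDerivAt (fun s : ℝ => q * s) q x := by
  simpa using (hasDerivAt_id x).const_mul q

/-- Example 4.2, solution (2.1): with c₁, c₂, c₃ > 0, β = -αa₁/b₁ and
a₁a² + a₂b² + abb₂ = 0, the function w is ∂_x(-log ψ) and ũ = -log ψ solves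
K[ũ] = 0 with ρ = μ = λ = 0. -/
theorem cosh_dressed_solution (α β a b c c₁ c₂ c₃ a₁ a₂ b₁ b₂ : ℝ)
    (hc₁ : 0 < c₁) (hc₂ : 0 < c₂) (hc₃ : 0 < c₃)
    (hb₁ : b₁ ≠ 0) (hβ : β = -(α * a₁) / b₁)
    (hroot : a₁ * a ^ 2 + a₂ * b ^ 2 + a * b * b₂ = 0)
    (ψ : ℝ → ℝ → ℝ → ℝ → ℝ)
    (hψ : ψ = fun x y z t =>
      c₁ * Real.cosh (α * x + β * y) + c₂ * Real.cosh (a * x + b * z)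
        + c₃ * Real.exp (a₂ * c ^ 2 * t) * Real.cosh (c * z))
    (u' : ℝ → ℝ → ℝ → ℝ → ℝ) (hu' : u' = fun x y z t => -Real.log (ψ x y z t))
    (w : ℝ → ℝ → ℝ → ℝ → ℝ)
    (hw : w = fun x y z t =>
      -(α * c₁ * Real.sinh (α * x + β * y) + a * c₂ * Real.sinh (a * x + b * z)) /
        (c₁ * Real.cosh (α * x + β * y) + c₂ * Real.cosh (a * x + b * z)
          + c₃ * Real.exp (a₂ * c ^ 2 * t) * Real.cosh (c * z))) :
    (∀ x y z t, 0 < ψ x y z t) ∧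
    (∀ x y z t, w x y z t = px u' x y z t) ∧
    (∀ x y z t, Keq a₁ a₂ b₁ b₂ 0 0 0 u' x y z t = 0) := by
  subst hψ hu' hw
  have hpos : ∀ x y z t : ℝ, (0:ℝ) <
      c₁ * Real.cosh (α * x + β * y) + c₂ * Real.cosh (a * x + b * z)
        + c₃ * Real.exp (a₂ * c ^ 2 * t) * Real.cosh (c * z) := by
    intro x y z t
    have h1 := Real.cosh_pos (α * x + β * y)
    have h2 := Real.cosh_pos (a * x + b * z)
    have h3 := Real.cosh_pos (c * z)
    have h4 := Real.exp_pos (a₂ * c ^ 2 * t)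
    positivity
  have hne : ∀ x y z t : ℝ,
      c₁ * Real.cosh (α * x + β * y) + c₂ * Real.cosh (a * x + b * z)
        + c₃ * Real.exp (a₂ * c ^ 2 * t) * Real.cosh (c * z) ≠ 0 :=
    fun x y z t => (hpos x y z t).ne'
  -- derivatives of ψ slices
  have HΨx : ∀ x y z t : ℝ, HasDerivAt
      (fun x' => c₁ * Real.cosh (α * x' + β * y) + c₂ * Real.cosh (a * x' + b * z)
        + c₃ * Real.exp (a₂ * c ^ 2 * t) * Real.cosh (c * z))
      (α * c₁ * Real.sinh (α * x + β * y) + a * c₂ * Real.sinh (a * x + b * z)) x := by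
    intro x y z t
    have h := ((((hd_affine α (β*y) x).cosh.const_mul c₁).add
        ((hd_affine a (b*z) x).cosh.const_mul c₂)).add_const
        (c₃ * Real.exp (a₂ * c ^ 2 * t) * Real.cosh (c * z)))
    exact h.congr_deriv (by ring)
  have HΨy : ∀ x y z t : ℝ, HasDerivAt
      (fun y' => c₁ * Real.cosh (α * x + β * y') + c₂ * Real.cosh (a * x + b * z)
        + c₃ * Real.exp (a₂ * c ^ 2 * t) * Real.cosh (c * z))
      (β * c₁ * Real.sinh (α * x + β * y)) y := by
    intro x y z t
    have h := (((hd_affine' β (α*x) y).cosh.const_mul c₁).add_const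
        (c₂ * Real.cosh (a * x + b * z))).add_const
        (c₃ * Real.exp (a₂ * c ^ 2 * t) * Real.cosh (c * z))
    exact h.congr_deriv (by ring)
  have HΨz : ∀ x y z t : ℝ, HasDerivAt
      (fun z' => c₁ * Real.cosh (α * x + β * y) + c₂ * Real.cosh (a * x + b * z')
        + c₃ * Real.exp (a₂ * c ^ 2 * t) * Real.cosh (c * z'))
      (b * c₂ * Real.sinh (a * x + b * z)
        + c * c₃ * Real.exp (a₂ * c ^ 2 * t) * Real.sinh (c * z)) z := by
    intro x y z t
    have h := ((((hd_affine' b (a*x) z).cosh.const_mul c₂).const_add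
        (c₁ * Real.cosh (α * x + β * y))).add
        (((hd_lin c z).cosh).const_mul (c₃ * Real.exp (a₂ * c ^ 2 * t))))
    exact h.congr_deriv (by ring)
  have HΨt : ∀ x y z t : ℝ, HasDerivAt
      (fun t' => c₁ * Real.cosh (α * x + β * y) + c₂ * Real.cosh (a * x + b * z)
        + c₃ * Real.exp (a₂ * c ^ 2 * t') * Real.cosh (c * z))
      (a₂ * c ^ 2 * c₃ * Real.exp (a₂ * c ^ 2 * t) * Real.cosh (c * z)) t := by
    intro x y z t
    have h := ((((hd_lin (a₂ * c ^ 2) t).exp).const_mul c₃).mul_const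
        (Real.cosh (c * z))).const_add
        (c₁ * Real.cosh (α * x + β * y) + c₂ * Real.cosh (a * x + b * z))
    exact h.congr_deriv (by ring)
  -- first partials of u'
  have hpx : ∀ x y z t : ℝ, px (fun x y z t => -Real.log
      (c₁ * Real.cosh (α * x + β * y) + c₂ * Real.cosh (a * x + b * z)
        + c₃ * Real.exp (a₂ * c ^ 2 * t) * Real.cosh (c * z))) x y z t =
      -((α * c₁ * Real.sinh (α * x + β * y) + a * c₂ * Real.sinh (a * x + b * z)) /
        (c₁ * Real.cosh (α * x + β * y) + c₂ * Real.cosh (a * x + b * z)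
          + c₃ * Real.exp (a₂ * c ^ 2 * t) * Real.cosh (c * z))) := by
    intro x y z t
    exact (((HΨx x y z t).log (hne x y z t)).neg).deriv
  have hpy : ∀ x y z t : ℝ, py (fun x y z t => -Real.log
      (c₁ * Real.cosh (α * x + β * y) + c₂ * Real.cosh (a * x + b * z)
        + c₃ * Real.exp (a₂ * c ^ 2 * t) * Real.cosh (c * z))) x y z t =
      -((β * c₁ * Real.sinh (α * x + β * y)) /
        (c₁ * Real.cosh (α * x + β * y) + c₂ * Real.cosh (a * x + b * z)
          + c₃ * Real.exp (a₂ * c ^ 2 * t) * Real.cosh (c * z))) := by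
    intro x y z t
    exact (((HΨy x y z t).log (hne x y z t)).neg).deriv
  have hpz : ∀ x y z t : ℝ, pz (fun x y z t => -Real.log
      (c₁ * Real.cosh (α * x + β * y) + c₂ * Real.cosh (a * x + b * z)
        + c₃ * Real.exp (a₂ * c ^ 2 * t) * Real.cosh (c * z))) x y z t =
      -((b * c₂ * Real.sinh (a * x + b * z)
          + c * c₃ * Real.exp (a₂ * c ^ 2 * t) * Real.sinh (c * z)) /
        (c₁ * Real.cosh (α * x + β * y) + c₂ * Real.cosh (a * x + b * z)
          + c₃ * Real.exp (a₂ * c ^ 2 * t) * Real.cosh (c * z))) := by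
    intro x y z t
    exact (((HΨz x y z t).log (hne x y z t)).neg).deriv
  have hpt : ∀ x y z t : ℝ, pt (fun x y z t => -Real.log
      (c₁ * Real.cosh (α * x + β * y) + c₂ * Real.cosh (a * x + b * z)
        + c₃ * Real.exp (a₂ * c ^ 2 * t) * Real.cosh (c * z))) x y z t =
      -((a₂ * c ^ 2 * c₃ * Real.exp (a₂ * c ^ 2 * t) * Real.cosh (c * z)) /
        (c₁ * Real.cosh (α * x + β * y) + c₂ * Real.cosh (a * x + b * z)
          + c₃ * Real.exp (a₂ * c ^ 2 * t) * Real.cosh (c * z))) := by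
    intro x y z t
    exact (((HΨt x y z t).log (hne x y z t)).neg).deriv
  -- second partials
  have hpxx : ∀ x y z t : ℝ, px (px (fun x y z t => -Real.log
      (c₁ * Real.cosh (α * x + β * y) + c₂ * Real.cosh (a * x + b * z)
        + c₃ * Real.exp (a₂ * c ^ 2 * t) * Real.cosh (c * z)))) x y z t =
      -(((α^2 * c₁ * Real.cosh (α * x + β * y) + a^2 * c₂ * Real.cosh (a * x + b * z)) *
          (c₁ * Real.cosh (α * x + β * y) + c₂ * Real.cosh (a * x + b * z)
            + c₃ * Real.exp (a₂ * c ^ 2 * t) * Real.cosh (c * z))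
        - (α * c₁ * Real.sinh (α * x + β * y) + a * c₂ * Real.sinh (a * x + b * z))^2) /
        (c₁ * Real.cosh (α * x + β * y) + c₂ * Real.cosh (a * x + b * z)
          + c₃ * Real.exp (a₂ * c ^ 2 * t) * Real.cosh (c * z))^2) := by
    intro x y z t
    have hfun : (fun x' => px (fun x y z t => -Real.log
        (c₁ * Real.cosh (α * x + β * y) + c₂ * Real.cosh (a * x + b * z)
          + c₃ * Real.exp (a₂ * c ^ 2 * t) * Real.cosh (c * z))) x' y z t) =
        fun x' => -((α * c₁ * Real.sinh (α * x' + β * y) + a * c₂ * Real.sinh (a * x' + b * z)) /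
          (c₁ * Real.cosh (α * x' + β * y) + c₂ * Real.cosh (a * x' + b * z)
            + c₃ * Real.exp (a₂ * c ^ 2 * t) * Real.cosh (c * z))) := by
      funext x'; exact hpx x' y z t
    show deriv _ x = _
    rw [hfun]
    have hnum : HasDerivAt (fun x' => α * c₁ * Real.sinh (α * x' + β * y)
        + a * c₂ * Real.sinh (a * x' + b * z))
        (α^2 * c₁ * Real.cosh (α * x + β * y) + a^2 * c₂ * Real.cosh (a * x + b * z)) x := by
      have h := (((hd_affine α (β*y) x).sinh).const_mul (α * c₁)).add
        (((hd_affine a (b*z) x).sinh).const_mul (a * c₂))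
      exact h.congr_deriv (by ring)
    refine (((hnum.div (HΨx x y z t) (hne x y z t)).neg).deriv).trans ?_
    all_goals ring
  have hpyx : ∀ x y z t : ℝ, px (py (fun x y z t => -Real.log
      (c₁ * Real.cosh (α * x + β * y) + c₂ * Real.cosh (a * x + b * z)
        + c₃ * Real.exp (a₂ * c ^ 2 * t) * Real.cosh (c * z)))) x y z t =
      -(((α * β * c₁ * Real.cosh (α * x + β * y)) *
          (c₁ * Real.cosh (α * x + β * y) + c₂ * Real.cosh (a * x + b * z)
            + c₃ * Real.exp (a₂ * c ^ 2 * t) * Real.cosh (c * z))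
        - (β * c₁ * Real.sinh (α * x + β * y)) *
          (α * c₁ * Real.sinh (α * x + β * y) + a * c₂ * Real.sinh (a * x + b * z))) /
        (c₁ * Real.cosh (α * x + β * y) + c₂ * Real.cosh (a * x + b * z)
          + c₃ * Real.exp (a₂ * c ^ 2 * t) * Real.cosh (c * z))^2) := by
    intro x y z t
    have hfun : (fun x' => py (fun x y z t => -Real.log
        (c₁ * Real.cosh (α * x + β * y) + c₂ * Real.cosh (a * x + b * z)
          + c₃ * Real.exp (a₂ * c ^ 2 * t) * Real.cosh (c * z))) x' y z t) =
        fun x' => -((β * c₁ * Real.sinh (α * x' + β * y)) /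
          (c₁ * Real.cosh (α * x' + β * y) + c₂ * Real.cosh (a * x' + b * z)
            + c₃ * Real.exp (a₂ * c ^ 2 * t) * Real.cosh (c * z))) := by
      funext x'; exact hpy x' y z t
    show deriv _ x = _
    rw [hfun]
    have hnum : HasDerivAt (fun x' => β * c₁ * Real.sinh (α * x' + β * y))
        (α * β * c₁ * Real.cosh (α * x + β * y)) x := by
      have h := ((hd_affine α (β*y) x).sinh).const_mul (β * c₁)
      exact h.congr_deriv (by ring)
    refine (((hnum.div (HΨx x y z t) (hne x y z t)).neg).deriv).trans ?_
    all_goals ring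
  have hpzx : ∀ x y z t : ℝ, px (pz (fun x y z t => -Real.log
      (c₁ * Real.cosh (α * x + β * y) + c₂ * Real.cosh (a * x + b * z)
        + c₃ * Real.exp (a₂ * c ^ 2 * t) * Real.cosh (c * z)))) x y z t =
      -(((a * b * c₂ * Real.cosh (a * x + b * z)) *
          (c₁ * Real.cosh (α * x + β * y) + c₂ * Real.cosh (a * x + b * z)
            + c₃ * Real.exp (a₂ * c ^ 2 * t) * Real.cosh (c * z))
        - (b * c₂ * Real.sinh (a * x + b * z)
            + c * c₃ * Real.exp (a₂ * c ^ 2 * t) * Real.sinh (c * z)) *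
          (α * c₁ * Real.sinh (α * x + β * y) + a * c₂ * Real.sinh (a * x + b * z))) /
        (c₁ * Real.cosh (α * x + β * y) + c₂ * Real.cosh (a * x + b * z)
          + c₃ * Real.exp (a₂ * c ^ 2 * t) * Real.cosh (c * z))^2) := by
    intro x y z t
    have hfun : (fun x' => pz (fun x y z t => -Real.log
        (c₁ * Real.cosh (α * x + β * y) + c₂ * Real.cosh (a * x + b * z)
          + c₃ * Real.exp (a₂ * c ^ 2 * t) * Real.cosh (c * z))) x' y z t) =
        fun x' => -((b * c₂ * Real.sinh (a * x' + b * z)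
            + c * c₃ * Real.exp (a₂ * c ^ 2 * t) * Real.sinh (c * z)) /
          (c₁ * Real.cosh (α * x' + β * y) + c₂ * Real.cosh (a * x' + b * z)
            + c₃ * Real.exp (a₂ * c ^ 2 * t) * Real.cosh (c * z))) := by
      funext x'; exact hpz x' y z t
    show deriv _ x = _
    rw [hfun]
    have hnum : HasDerivAt (fun x' => b * c₂ * Real.sinh (a * x' + b * z)
        + c * c₃ * Real.exp (a₂ * c ^ 2 * t) * Real.sinh (c * z))
        (a * b * c₂ * Real.cosh (a * x + b * z)) x := by
      have h := (((hd_affine a (b*z) x).sinh).const_mul (b * c₂)).add_const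
        (c * c₃ * Real.exp (a₂ * c ^ 2 * t) * Real.sinh (c * z))
      exact h.congr_deriv (by ring)
    refine (((hnum.div (HΨx x y z t) (hne x y z t)).neg).deriv).trans ?_
    all_goals ring
  have hpzz : ∀ x y z t : ℝ, pz (pz (fun x y z t => -Real.log
      (c₁ * Real.cosh (α * x + β * y) + c₂ * Real.cosh (a * x + b * z)
        + c₃ * Real.exp (a₂ * c ^ 2 * t) * Real.cosh (c * z)))) x y z t =
      -(((b^2 * c₂ * Real.cosh (a * x + b * z)
            + c^2 * c₃ * Real.exp (a₂ * c ^ 2 * t) * Real.cosh (c * z)) *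
          (c₁ * Real.cosh (α * x + β * y) + c₂ * Real.cosh (a * x + b * z)
            + c₃ * Real.exp (a₂ * c ^ 2 * t) * Real.cosh (c * z))
        - (b * c₂ * Real.sinh (a * x + b * z)
            + c * c₃ * Real.exp (a₂ * c ^ 2 * t) * Real.sinh (c * z))^2) /
        (c₁ * Real.cosh (α * x + β * y) + c₂ * Real.cosh (a * x + b * z)
          + c₃ * Real.exp (a₂ * c ^ 2 * t) * Real.cosh (c * z))^2) := by
    intro x y z t
    have hfun : (fun z' => pz (fun x y z t => -Real.log
        (c₁ * Real.cosh (α * x + β * y) + c₂ * Real.cosh (a * x + b * z)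
          + c₃ * Real.exp (a₂ * c ^ 2 * t) * Real.cosh (c * z))) x y z' t) =
        fun z' => -((b * c₂ * Real.sinh (a * x + b * z')
            + c * c₃ * Real.exp (a₂ * c ^ 2 * t) * Real.sinh (c * z')) /
          (c₁ * Real.cosh (α * x + β * y) + c₂ * Real.cosh (a * x + b * z')
            + c₃ * Real.exp (a₂ * c ^ 2 * t) * Real.cosh (c * z'))) := by
      funext z'; exact hpz x y z' t
    show deriv _ z = _
    rw [hfun]
    have hnum : HasDerivAt (fun z' => b * c₂ * Real.sinh (a * x + b * z')
        + c * c₃ * Real.exp (a₂ * c ^ 2 * t) * Real.sinh (c * z'))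
        (b^2 * c₂ * Real.cosh (a * x + b * z)
          + c^2 * c₃ * Real.exp (a₂ * c ^ 2 * t) * Real.cosh (c * z)) z := by
      have h := (((hd_affine' b (a*x) z).sinh).const_mul (b * c₂)).add
        (((hd_lin c z).sinh).const_mul (c * c₃ * Real.exp (a₂ * c ^ 2 * t)))
      exact h.congr_deriv (by ring)
    refine (((hnum.div (HΨz x y z t) (hne x y z t)).neg).deriv).trans ?_
    all_goals ring
  refine ⟨hpos, ?_, ?_⟩
  · intro x y z t
    beta_reduce
    rw [hpx x y z t, neg_div]
  · intro x y z t
    have hβ2 : β * b₁ = -(α * a₁) := by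
      rw [hβ]; field_simp
    have hPne := hne x y z t
    have hsum : ∀ A N P : ℝ, P ≠ 0 →
        (-(N / P)) ^ 2 - -((A * P - N ^ 2) / P ^ 2) = A / P := by
      intro A N P hP; field_simp; ring
    have hmix : ∀ A M N P : ℝ, P ≠ 0 →
        -(N / P) * -(M / P) - -((A * P - M * N) / P ^ 2) = A / P := by
      intro A M N P hP; field_simp; ring
    simp only [Keq, zero_mul, sub_zero]
    rw [hpt x y z t, hpx x y z t, hpy x y z t, hpz x y z t,
      hpxx x y z t, hpyx x y z t, hpzx x y z t, hpzz x y z t,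
      hsum _ _ _ hPne, hsum _ _ _ hPne, hmix _ _ _ _ hPne, hmix _ _ _ _ hPne]
    linear_combination
      (c₂ * Real.cosh (a * x + b * z) /
        (c₁ * Real.cosh (α * x + β * y) + c₂ * Real.cosh (a * x + b * z)
          + c₃ * Real.exp (a₂ * c ^ 2 * t) * Real.cosh (c * z))) * hroot
      + (α * c₁ * Real.cosh (α * x + β * y) /
        (c₁ * Real.cosh (α * x + β * y) + c₂ * Real.cosh (a * x + b * z)
          + c₃ * Real.exp (a₂ * c ^ 2 * t) * Real.cosh (c * z))) * hβ2
end

section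
/- Let u, v : ℝ⁴ → ℝ be smooth and suppose v satisfies v_t = a₁(v_xx + v_x²) + a₂(v_zz + v_z²) + b₁(v_xy + v_xv_y) + b₂(v_xz + v_xv_z) + (ρ - 2a₁u_x - b₂u_z - b₁u_y)v_x + (μ - b₁u_x)v_y + (λ - 2a₂u_z - b₂u_x)v_z, and u satisfies K[u] = 0. Then ũ := u - v satisfies K[ũ] = 0. -/
open Real

/-! ### Auxiliary machinery -/

/-- The packaged 4-variable function. -/
noncomputable def Fn4 (u : ℝ → ℝ → ℝ → ℝ → ℝ) : ℝ × ℝ × ℝ × ℝ → ℝ :=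
  fun p => u p.1 p.2.1 p.2.2.1 p.2.2.2

lemma hdx (u : ℝ → ℝ → ℝ → ℝ → ℝ) (hu : Smooth4 u) (x y z t : ℝ) :
    HasDerivAt (fun x' => u x' y z t)
      (fderiv ℝ (Fn4 u) (x, y, z, t) (1, 0, 0, 0)) x := by
  have hF : HasFDerivAt (Fn4 u) (fderiv ℝ (Fn4 u) (x,y,z,t)) (x,y,z,t) :=
    (hu.differentiable (by simp) (x,y,z,t)).hasFDerivAt
  have hL : HasDerivAt (fun x' : ℝ => ((x', y, z, t) : ℝ×ℝ×ℝ×ℝ)) ((1,0,0,0) : ℝ×ℝ×ℝ×ℝ) x :=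
    HasDerivAt.prodMk (hasDerivAt_id x) (hasDerivAt_const x _)
  exact hF.comp_hasDerivAt x hL

lemma hdy (u : ℝ → ℝ → ℝ → ℝ → ℝ) (hu : Smooth4 u) (x y z t : ℝ) :
    HasDerivAt (fun y' => u x y' z t)
      (fderiv ℝ (Fn4 u) (x, y, z, t) (0, 1, 0, 0)) y := by
  have hF : HasFDerivAt (Fn4 u) (fderiv ℝ (Fn4 u) (x,y,z,t)) (x,y,z,t) :=
    (hu.differentiable (by simp) (x,y,z,t)).hasFDerivAt
  have hL : HasDerivAt (fun y' : ℝ => ((x, y', z, t) : ℝ×ℝ×ℝ×ℝ)) ((0,1,0,0) : ℝ×ℝ×ℝ×ℝ) y :=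
    HasDerivAt.prodMk (hasDerivAt_const y x) (HasDerivAt.prodMk (hasDerivAt_id y) (hasDerivAt_const y _))
  exact hF.comp_hasDerivAt y hL

lemma hdz (u : ℝ → ℝ → ℝ → ℝ → ℝ) (hu : Smooth4 u) (x y z t : ℝ) :
    HasDerivAt (fun z' => u x y z' t)
      (fderiv ℝ (Fn4 u) (x, y, z, t) (0, 0, 1, 0)) z := by
  have hF : HasFDerivAt (Fn4 u) (fderiv ℝ (Fn4 u) (x,y,z,t)) (x,y,z,t) :=
    (hu.differentiable (by simp) (x,y,z,t)).hasFDerivAt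
  have hL : HasDerivAt (fun z' : ℝ => ((x, y, z', t) : ℝ×ℝ×ℝ×ℝ)) ((0,0,1,0) : ℝ×ℝ×ℝ×ℝ) z :=
    HasDerivAt.prodMk (hasDerivAt_const z x) (HasDerivAt.prodMk (hasDerivAt_const z y)
      (HasDerivAt.prodMk (hasDerivAt_id z) (hasDerivAt_const z _)))
  exact hF.comp_hasDerivAt z hL

lemma hdt (u : ℝ → ℝ → ℝ → ℝ → ℝ) (hu : Smooth4 u) (x y z t : ℝ) :
    HasDerivAt (fun t' => u x y z t')
      (fderiv ℝ (Fn4 u) (x, y, z, t) (0, 0, 0, 1)) t := by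
  have hF : HasFDerivAt (Fn4 u) (fderiv ℝ (Fn4 u) (x,y,z,t)) (x,y,z,t) :=
    (hu.differentiable (by simp) (x,y,z,t)).hasFDerivAt
  have hL : HasDerivAt (fun t' : ℝ => ((x, y, z, t') : ℝ×ℝ×ℝ×ℝ)) ((0,0,0,1) : ℝ×ℝ×ℝ×ℝ) t :=
    HasDerivAt.prodMk (hasDerivAt_const t x) (HasDerivAt.prodMk (hasDerivAt_const t y)
      (HasDerivAt.prodMk (hasDerivAt_const t z) (hasDerivAt_id t)))
  exact hF.comp_hasDerivAt t hL

lemma hdpx (u : ℝ → ℝ → ℝ → ℝ → ℝ) (hu : Smooth4 u) (x y z t : ℝ) :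
    HasDerivAt (fun x' => u x' y z t) (px u x y z t) x := by
  have h := hdx u hu x y z t
  have : px u x y z t = fderiv ℝ (Fn4 u) (x, y, z, t) (1, 0, 0, 0) := h.deriv
  rw [this]; exact h

lemma hdpy (u : ℝ → ℝ → ℝ → ℝ → ℝ) (hu : Smooth4 u) (x y z t : ℝ) :
    HasDerivAt (fun y' => u x y' z t) (py u x y z t) y := by
  have h := hdy u hu x y z t
  have : py u x y z t = fderiv ℝ (Fn4 u) (x, y, z, t) (0, 1, 0, 0) := h.deriv
  rw [this]; exact h

lemma hdpz (u : ℝ → ℝ → ℝ → ℝ → ℝ) (hu : Smooth4 u) (x y z t : ℝ) :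
    HasDerivAt (fun z' => u x y z' t) (pz u x y z t) z := by
  have h := hdz u hu x y z t
  have : pz u x y z t = fderiv ℝ (Fn4 u) (x, y, z, t) (0, 0, 1, 0) := h.deriv
  rw [this]; exact h

lemma hdpt (u : ℝ → ℝ → ℝ → ℝ → ℝ) (hu : Smooth4 u) (x y z t : ℝ) :
    HasDerivAt (fun t' => u x y z t') (pt u x y z t) t := by
  have h := hdt u hu x y z t
  have : pt u x y z t = fderiv ℝ (Fn4 u) (x, y, z, t) (0, 0, 0, 1) := h.deriv
  rw [this]; exact h

lemma smooth_fderiv_apply (u : ℝ → ℝ → ℝ → ℝ → ℝ) (hu : Smooth4 u) (w : ℝ × ℝ × ℝ × ℝ) :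
    ContDiff ℝ (⊤ : ℕ∞) (fun p : ℝ × ℝ × ℝ × ℝ => fderiv ℝ (Fn4 u) p w) :=
  (hu.fderiv_right (le_refl _)).clm_apply contDiff_const

lemma smooth_px (u : ℝ → ℝ → ℝ → ℝ → ℝ) (hu : Smooth4 u) : Smooth4 (px u) := by
  have : (fun p : ℝ × ℝ × ℝ × ℝ => px u p.1 p.2.1 p.2.2.1 p.2.2.2)
      = fun p => fderiv ℝ (Fn4 u) p (1, 0, 0, 0) := by
    funext p
    exact (hdx u hu p.1 p.2.1 p.2.2.1 p.2.2.2).deriv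
  unfold Smooth4
  rw [this]
  exact smooth_fderiv_apply u hu _

lemma smooth_py (u : ℝ → ℝ → ℝ → ℝ → ℝ) (hu : Smooth4 u) : Smooth4 (py u) := by
  have : (fun p : ℝ × ℝ × ℝ × ℝ => py u p.1 p.2.1 p.2.2.1 p.2.2.2)
      = fun p => fderiv ℝ (Fn4 u) p (0, 1, 0, 0) := by
    funext p
    exact (hdy u hu p.1 p.2.1 p.2.2.1 p.2.2.2).deriv
  unfold Smooth4
  rw [this]
  exact smooth_fderiv_apply u hu _

lemma smooth_pz (u : ℝ → ℝ → ℝ → ℝ → ℝ) (hu : Smooth4 u) : Smooth4 (pz u) := by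
  have : (fun p : ℝ × ℝ × ℝ × ℝ => pz u p.1 p.2.1 p.2.2.1 p.2.2.2)
      = fun p => fderiv ℝ (Fn4 u) p (0, 0, 1, 0) := by
    funext p
    exact (hdz u hu p.1 p.2.1 p.2.2.1 p.2.2.2).deriv
  unfold Smooth4
  rw [this]
  exact smooth_fderiv_apply u hu _

lemma px_sub (u v : ℝ → ℝ → ℝ → ℝ → ℝ) (hu : Smooth4 u) (hv : Smooth4 v) (x y z t : ℝ) :
    px (fun x y z t => u x y z t - v x y z t) x y z t = px u x y z t - px v x y z t :=
  ((hdpx u hu x y z t).sub (hdpx v hv x y z t)).deriv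

lemma py_sub (u v : ℝ → ℝ → ℝ → ℝ → ℝ) (hu : Smooth4 u) (hv : Smooth4 v) (x y z t : ℝ) :
    py (fun x y z t => u x y z t - v x y z t) x y z t = py u x y z t - py v x y z t :=
  ((hdpy u hu x y z t).sub (hdpy v hv x y z t)).deriv

lemma pz_sub (u v : ℝ → ℝ → ℝ → ℝ → ℝ) (hu : Smooth4 u) (hv : Smooth4 v) (x y z t : ℝ) :
    pz (fun x y z t => u x y z t - v x y z t) x y z t = pz u x y z t - pz v x y z t :=
  ((hdpz u hu x y z t).sub (hdpz v hv x y z t)).deriv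

lemma pt_sub (u v : ℝ → ℝ → ℝ → ℝ → ℝ) (hu : Smooth4 u) (hv : Smooth4 v) (x y z t : ℝ) :
    pt (fun x y z t => u x y z t - v x y z t) x y z t = pt u x y z t - pt v x y z t :=
  ((hdpt u hu x y z t).sub (hdpt v hv x y z t)).deriv

/-- Equation (22): if v satisfies the nonlinear auxiliary equation with potential u and
K[u] = 0, then ũ = u - v satisfies K[ũ] = 0. -/
theorem potential_shift_symmetry (a₁ a₂ b₁ b₂ ρ μ lam : ℝ)
    (u v : ℝ → ℝ → ℝ → ℝ → ℝ) (hu : Smooth4 u) (hv : Smooth4 v)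
    (hveq : ∀ x y z t,
      pt v x y z t =
        a₁ * (px (px v) x y z t + (px v x y z t) ^ 2)
          + a₂ * (pz (pz v) x y z t + (pz v x y z t) ^ 2)
          + b₁ * (px (py v) x y z t + px v x y z t * py v x y z t)
          + b₂ * (px (pz v) x y z t + px v x y z t * pz v x y z t)
          + (ρ - 2 * a₁ * px u x y z t - b₂ * pz u x y z t - b₁ * py u x y z t) *
              px v x y z t
          + (μ - b₁ * px u x y z t) * py v x y z t
          + (lam - 2 * a₂ * pz u x y z t - b₂ * px u x y z t) * pz v x y z t)
    (hK : ∀ x y z t, Keq a₁ a₂ b₁ b₂ ρ μ lam u x y z t = 0) :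
    ∀ x y z t, Keq a₁ a₂ b₁ b₂ ρ μ lam (fun x y z t => u x y z t - v x y z t) x y z t = 0 := by
  intro x y z t
  set w : ℝ → ℝ → ℝ → ℝ → ℝ := fun x y z t => u x y z t - v x y z t with hw
  have hxeq : px w = fun x y z t => px u x y z t - px v x y z t := by
    funext a b c d; exact px_sub u v hu hv a b c d
  have hyeq : py w = fun x y z t => py u x y z t - py v x y z t := by
    funext a b c d; exact py_sub u v hu hv a b c d
  have hzeq : pz w = fun x y z t => pz u x y z t - pz v x y z t := by
    funext a b c d; exact pz_sub u v hu hv a b c d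
  have hxx : px (px w) x y z t = px (px u) x y z t - px (px v) x y z t := by
    rw [hxeq]; exact px_sub (px u) (px v) (smooth_px u hu) (smooth_px v hv) x y z t
  have hzz : pz (pz w) x y z t = pz (pz u) x y z t - pz (pz v) x y z t := by
    rw [hzeq]; exact pz_sub (pz u) (pz v) (smooth_pz u hu) (smooth_pz v hv) x y z t
  have hxy : px (py w) x y z t = px (py u) x y z t - px (py v) x y z t := by
    rw [hyeq]; exact px_sub (py u) (py v) (smooth_py u hu) (smooth_py v hv) x y z t
  have hxz : px (pz w) x y z t = px (pz u) x y z t - px (pz v) x y z t := by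
    rw [hzeq]; exact px_sub (pz u) (pz v) (smooth_pz u hu) (smooth_pz v hv) x y z t
  have h1 := hK x y z t
  have h2 := hveq x y z t
  simp only [Keq] at h1 ⊢
  rw [pt_sub u v hu hv x y z t, px_sub u v hu hv x y z t, py_sub u v hu hv x y z t,
    pz_sub u v hu hv x y z t, hxx, hzz, hxy, hxz]
  linear_combination h1 - h2
end

section
/- Let u : ℝ⁴ → ℝ be a smooth solution of K[u] = 0 and ψ : ℝ⁴ → ℝ a smooth positive solution of the A-equation ψ_t = A[u]ψ (the linear equation with potential u). Then ũ := u - log ψ satisfies K[ũ] = 0. (This is Theorem 1 of the paper in the case k = l = m = 0.) -/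
open Real

/-- The right-hand side A[u]ψ of the linear A-equation of the Lax pair. -/
noncomputable def Aop (a₁ a₂ b₁ b₂ ρ μ lam : ℝ) (u ψ : ℝ → ℝ → ℝ → ℝ → ℝ) :
    ℝ → ℝ → ℝ → ℝ → ℝ :=
  fun x y z t =>
    a₁ * px (px ψ) x y z t + a₂ * pz (pz ψ) x y z t
      + b₁ * px (py ψ) x y z t + b₂ * px (pz ψ) x y z t
      + (ρ - 2 * a₁ * px u x y z t - b₂ * pz u x y z t - b₁ * py u x y z t) * px ψ x y z t
      + (μ - b₁ * px u x y z t) * py ψ x y z t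
      + (lam - 2 * a₂ * pz u x y z t - b₂ * px u x y z t) * pz ψ x y z t


noncomputable section DressAux

abbrev E4 : Type := ℝ × ℝ × ℝ × ℝ

def cur (F : E4 → ℝ) : ℝ → ℝ → ℝ → ℝ → ℝ := fun x y z t => F (x, y, z, t)

def Dw (w : E4) (F : E4 → ℝ) : E4 → ℝ := fun p => fderiv ℝ F p w

def e1 : E4 := (1, 0, 0, 0)
def e2 : E4 := (0, 1, 0, 0)
def e3 : E4 := (0, 0, 1, 0)
def e4 : E4 := (0, 0, 0, 1)

lemma Dw_contDiff (w : E4) {F : E4 → ℝ} (hF : ContDiff ℝ (⊤ : ℕ∞) F) :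
    ContDiff ℝ (⊤ : ℕ∞) (Dw w F) :=
  (ContinuousLinearMap.apply ℝ ℝ w).contDiff.comp (contDiff_infty_iff_fderiv.mp hF).2

lemma hasDerivAt_s1 (x y z t : ℝ) :
    HasDerivAt (fun x' : ℝ => ((x', y, z, t) : E4)) e1 x :=
  HasDerivAt.prodMk (hasDerivAt_id x) (hasDerivAt_const x ((y, z, t) : ℝ × ℝ × ℝ))

lemma hasDerivAt_s2 (x y z t : ℝ) :
    HasDerivAt (fun y' : ℝ => ((x, y', z, t) : E4)) e2 y :=
  HasDerivAt.prodMk (hasDerivAt_const y x) (HasDerivAt.prodMk (hasDerivAt_id y) (hasDerivAt_const y ((z, t) : ℝ × ℝ)))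

lemma hasDerivAt_s3 (x y z t : ℝ) :
    HasDerivAt (fun z' : ℝ => ((x, y, z', t) : E4)) e3 z :=
  HasDerivAt.prodMk (hasDerivAt_const z x) (HasDerivAt.prodMk (hasDerivAt_const z y) (HasDerivAt.prodMk (hasDerivAt_id z) (hasDerivAt_const z t)))

lemma hasDerivAt_s4 (x y z t : ℝ) :
    HasDerivAt (fun t' : ℝ => ((x, y, z, t') : E4)) e4 t :=
  HasDerivAt.prodMk (hasDerivAt_const t x) (HasDerivAt.prodMk (hasDerivAt_const t y) (HasDerivAt.prodMk (hasDerivAt_const t z) (hasDerivAt_id t)))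

theorem px_cur {F : E4 → ℝ} (hF : Differentiable ℝ F) : px (cur F) = cur (Dw e1 F) := by
  funext x y z t
  exact (((hF (x, y, z, t)).hasFDerivAt).comp_hasDerivAt x (hasDerivAt_s1 x y z t)).deriv

theorem py_cur {F : E4 → ℝ} (hF : Differentiable ℝ F) : py (cur F) = cur (Dw e2 F) := by
  funext x y z t
  exact (((hF (x, y, z, t)).hasFDerivAt).comp_hasDerivAt y (hasDerivAt_s2 x y z t)).deriv

theorem pz_cur {F : E4 → ℝ} (hF : Differentiable ℝ F) : pz (cur F) = cur (Dw e3 F) := by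
  funext x y z t
  exact (((hF (x, y, z, t)).hasFDerivAt).comp_hasDerivAt z (hasDerivAt_s3 x y z t)).deriv

theorem pt_cur {F : E4 → ℝ} (hF : Differentiable ℝ F) : pt (cur F) = cur (Dw e4 F) := by
  funext x y z t
  exact (((hF (x, y, z, t)).hasFDerivAt).comp_hasDerivAt t (hasDerivAt_s4 x y z t)).deriv

lemma diffOf {F : E4 → ℝ} (hF : ContDiff ℝ (⊤ : ℕ∞) F) : Differentiable ℝ F :=
  hF.differentiable (by simp)


theorem main_aux (a₁ a₂ b₁ b₂ ρ μ lam : ℝ) (U Ψ : E4 → ℝ)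
    (hU : ContDiff ℝ (⊤ : ℕ∞) U) (hΨ : ContDiff ℝ (⊤ : ℕ∞) Ψ)
    (hpos : ∀ p, 0 < Ψ p)
    (hK : ∀ x y z t, Keq a₁ a₂ b₁ b₂ ρ μ lam (cur U) x y z t = 0)
    (hA : ∀ x y z t, pt (cur Ψ) x y z t = Aop a₁ a₂ b₁ b₂ ρ μ lam (cur U) (cur Ψ) x y z t)
    (x y z t : ℝ) :
    Keq a₁ a₂ b₁ b₂ ρ μ lam (cur (fun p => U p - Real.log (Ψ p))) x y z t = 0 := by
  have hne : ∀ p, Ψ p ≠ 0 := fun p => (hpos p).ne'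
  set V : E4 → ℝ := fun p => U p - Real.log (Ψ p) with hVdef
  have hG : ContDiff ℝ (⊤ : ℕ∞) (fun p => Real.log (Ψ p)) := by
    rw [contDiff_iff_contDiffAt]
    exact fun p => (hΨ.contDiffAt).log (hne p)
  have hV : ContDiff ℝ (⊤ : ℕ∞) V := by rw [hVdef]; exact hU.sub hG
  have hD1 : ∀ (w : E4) (p : E4), Dw w V p = Dw w U p - Dw w Ψ p / Ψ p := by
    intro w p
    have hΨd := (diffOf hΨ p).hasFDerivAt
    have hVd : HasFDerivAt V (fderiv ℝ U p - (Ψ p)⁻¹ • fderiv ℝ Ψ p) p := by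
      rw [hVdef]
      exact ((diffOf hU p).hasFDerivAt).sub (hΨd.log (hne p))
    have h1 : Dw w V p = (fderiv ℝ U p - (Ψ p)⁻¹ • fderiv ℝ Ψ p) w := by
      simp only [Dw, hVd.fderiv]
    rw [h1]
    simp only [ContinuousLinearMap.sub_apply, ContinuousLinearMap.smul_apply, smul_eq_mul, Dw]
    ring
  have hD2 : ∀ (w w' : E4) (p : E4),
      Dw w' (Dw w V) p =
        Dw w' (Dw w U) p
          - (Ψ p * Dw w' (Dw w Ψ) p - Dw w Ψ p * Dw w' Ψ p) / Ψ p ^ 2 := by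
    intro w w' p
    have hfun : Dw w V = fun q => Dw w U q - Dw w Ψ q * (Ψ q)⁻¹ := by
      funext q; rw [hD1 w q, div_eq_mul_inv]
    have hUd := (diffOf (Dw_contDiff w hU) p).hasFDerivAt
    have hΨwd := (diffOf (Dw_contDiff w hΨ) p).hasFDerivAt
    have hΨd := (diffOf hΨ p).hasFDerivAt
    have hinv : HasFDerivAt (fun q => (Ψ q)⁻¹) ((-(Ψ p ^ 2)⁻¹) • fderiv ℝ Ψ p) p :=
      (hasDerivAt_inv (hne p)).comp_hasFDerivAt p hΨd
    have hVd : HasFDerivAt (Dw w V)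
        (fderiv ℝ (Dw w U) p
          - (Dw w Ψ p • ((-(Ψ p ^ 2)⁻¹) • fderiv ℝ Ψ p)
            + (Ψ p)⁻¹ • fderiv ℝ (Dw w Ψ) p)) p := by
      rw [hfun]; exact hUd.sub (hΨwd.mul hinv)
    have h1 : Dw w' (Dw w V) p
        = (fderiv ℝ (Dw w U) p
          - (Dw w Ψ p • ((-(Ψ p ^ 2)⁻¹) • fderiv ℝ Ψ p)
            + (Ψ p)⁻¹ • fderiv ℝ (Dw w Ψ) p)) w' := by
      simp only [Dw, hVd.fderiv]
    rw [h1]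
    have hsne := hne p
    simp only [ContinuousLinearMap.sub_apply, ContinuousLinearMap.add_apply,
      ContinuousLinearMap.smul_apply, smul_eq_mul, Dw]
    field_simp
    ring
  have dU := diffOf hU
  have dΨ := diffOf hΨ
  have dV := diffOf hV
  have dU1 := diffOf (Dw_contDiff e1 hU)
  have dU2 := diffOf (Dw_contDiff e2 hU)
  have dU3 := diffOf (Dw_contDiff e3 hU)
  have dΨ1 := diffOf (Dw_contDiff e1 hΨ)
  have dΨ2 := diffOf (Dw_contDiff e2 hΨ)
  have dΨ3 := diffOf (Dw_contDiff e3 hΨ)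
  have dV1 := diffOf (Dw_contDiff e1 hV)
  have dV2 := diffOf (Dw_contDiff e2 hV)
  have dV3 := diffOf (Dw_contDiff e3 hV)
  have hKp := hK x y z t
  have hAp := hA x y z t
  simp only [Keq] at hKp ⊢
  simp only [Aop] at hAp
  rw [px_cur dU, py_cur dU, pz_cur dU, pt_cur dU] at hKp
  rw [px_cur dU1, pz_cur dU3, px_cur dU2, px_cur dU3] at hKp
  simp only [cur] at hKp
  rw [pt_cur dΨ, px_cur dΨ, py_cur dΨ, pz_cur dΨ, px_cur dU, py_cur dU, pz_cur dU] at hAp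
  rw [px_cur dΨ1, pz_cur dΨ3, px_cur dΨ2, px_cur dΨ3] at hAp
  simp only [cur] at hAp
  rw [px_cur dV, py_cur dV, pz_cur dV, pt_cur dV]
  rw [px_cur dV1, pz_cur dV3, px_cur dV2, px_cur dV3]
  simp only [cur]
  rw [hD1 e1 (x, y, z, t), hD1 e2 (x, y, z, t), hD1 e3 (x, y, z, t), hD1 e4 (x, y, z, t),
    hD2 e1 e1 (x, y, z, t), hD2 e3 e3 (x, y, z, t), hD2 e2 e1 (x, y, z, t),
    hD2 e3 e1 (x, y, z, t)]
  have hUt : Dw e4 U (x, y, z, t) =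
      -(a₁ * ((Dw e1 U (x, y, z, t)) ^ 2 - Dw e1 (Dw e1 U) (x, y, z, t)))
      - a₂ * ((Dw e3 U (x, y, z, t)) ^ 2 - Dw e3 (Dw e3 U) (x, y, z, t))
      - b₁ * (Dw e1 U (x, y, z, t) * Dw e2 U (x, y, z, t) - Dw e1 (Dw e2 U) (x, y, z, t))
      - b₂ * (Dw e1 U (x, y, z, t) * Dw e3 U (x, y, z, t) - Dw e1 (Dw e3 U) (x, y, z, t))
      + ρ * Dw e1 U (x, y, z, t) + μ * Dw e2 U (x, y, z, t) + lam * Dw e3 U (x, y, z, t) := by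
    linear_combination hKp
  rw [hUt, hAp]
  have hS := hne (x, y, z, t)
  field_simp
  ring
end DressAux
/-- Theorem 1 (case k = l = m = 0): if K[u] = 0 and ψ > 0 is a smooth solution of
the A-equation ψ_t = A[u]ψ, then ũ = u - log ψ satisfies K[ũ] = 0. -/
theorem dressing_theorem (a₁ a₂ b₁ b₂ ρ μ lam : ℝ)
    (u : ℝ → ℝ → ℝ → ℝ → ℝ) (hu : Smooth4 u)
    (hK : ∀ x y z t, Keq a₁ a₂ b₁ b₂ ρ μ lam u x y z t = 0)
    (ψ : ℝ → ℝ → ℝ → ℝ → ℝ) (hψ : Smooth4 ψ) (hpos : ∀ x y z t, 0 < ψ x y z t)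
    (hA : ∀ x y z t, pt ψ x y z t = Aop a₁ a₂ b₁ b₂ ρ μ lam u ψ x y z t) :
    ∀ x y z t,
      Keq a₁ a₂ b₁ b₂ ρ μ lam
        (fun x y z t => u x y z t - Real.log (ψ x y z t)) x y z t = 0 := by
  exact fun x y z t =>
    main_aux a₁ a₂ b₁ b₂ ρ μ lam
      (fun p => u p.1 p.2.1 p.2.2.1 p.2.2.2) (fun p => ψ p.1 p.2.1 p.2.2.1 p.2.2.2)
      (hu.of_le (by simp)) (hψ.of_le (by simp))
      (fun p => hpos p.1 p.2.1 p.2.2.1 p.2.2.2) hK hA x y z t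
end
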